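/- Let ε ∈ (0, 1/4], let M be a positive integer with M·ε ≥ 1, and let u₀ ∈ (2ε, 1 − 2ε). Let û₀ be the empirical mean of M i.i.d. Bernoulli(u₀) random variables. Then the event {|û₀ − u₀| < ε} has positive probability and E[(û₀ − ε)^{−1} | |û₀ − u₀| < ε] ≥ ε/(u₀·(u₀ − ε))·C(M, ⌊2εM⌋)·(2ε)^M + 1/u₀, where C(M, k) denotes the binomial coefficient. -/

import Mathlib

/-!
Let `k = ⌊u₀ M⌋`. Since `1 ≤ M ε`, the mean `k / M` lies in `(u₀ - ε, u₀]`, so the event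
`B = {∑ yᵢ = k}` is contained in `A`. On `A` the integrand `(û₀ - ε)⁻¹` is at least `u₀⁻¹`, and
on `B` it is at least `(u₀ - ε)⁻¹ = u₀⁻¹ + ε / (u₀ (u₀ - ε))`; hence
`E[(û₀ - ε)⁻¹ | A] ≥ u₀⁻¹ + ε / (u₀ (u₀ - ε)) · P(B | A)`, and `P(B | A) ≥ P(B)`.
Finally `P(B) ≥ C(M, k) u₀ᵏ (1 - u₀)^(M - k) ≥ C(M, ⌊2εM⌋) (2ε)ᴹ`, because both `u₀` and
`1 - u₀` exceed `2ε` and `⌊2εM⌋ ≤ k ≤ M - ⌊2εM⌋`.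
-/

open MeasureTheory ProbabilityTheory
open scoped ENNReal

/-- The Bernoulli distribution with parameter `p`, as a measure on `ℝ`
(mass `p` at `1` and mass `1 - p` at `0`). -/
noncomputable def bernoulliReal (p : ℝ) : Measure ℝ :=
  ENNReal.ofReal p • Measure.dirac 1 + ENNReal.ofReal (1 - p) • Measure.dirac 0

open Finset

theorem Nat.choose_le_choose_of_le_of_le_half {n a b : ℕ} (hab : a ≤ b) (hb : b ≤ n / 2) :
    n.choose a ≤ n.choose b := by
  induction b, hab using Nat.le_induction with
  | base => rfl
  | succ c _ ih => exact (ih (by omega)).trans (choose_le_succ_of_lt_half_left (by omega))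

theorem Nat.choose_le_choose_of_le_of_le_sub {n a b : ℕ} (hab : a ≤ b) (hb : b ≤ n - a) :
    n.choose a ≤ n.choose b := by
  rcases le_or_gt b (n / 2) with h | h
  · exact choose_le_choose_of_le_of_le_half hab h
  · rw [← choose_symm (hb.trans (sub_le n a))]
    exact choose_le_choose_of_le_of_le_half (by omega) (by omega)

lemma pow_le_pow_mul_one_sub_pow {q p : ℝ} (hq : 0 ≤ q) (hqp : q ≤ p) (hp : p ≤ 1 - q)
    {k n : ℕ} (hkn : k ≤ n) : q ^ n ≤ p ^ k * (1 - p) ^ (n - k) := by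
  have hp0 : 0 ≤ p := hq.trans hqp
  rw [← Nat.add_sub_cancel' hkn, pow_add, Nat.add_sub_cancel_left]
  gcongr
  linarith

lemma natFloor_mul_div_mem_Ioc {u ε : ℝ} {M : ℕ} (hu : 0 ≤ u) (hMε : 1 ≤ M * ε) :
    (⌊u * M⌋₊ : ℝ) / M ∈ Set.Ioc (u - ε) u := by
  have hM : (0 : ℝ) < M := Nat.cast_pos.2 (Nat.pos_of_ne_zero (by rintro rfl; norm_num at hMε))
  rw [Set.mem_Ioc, lt_div_iff₀ hM, div_le_iff₀ hM]
  exact ⟨by linarith [Nat.sub_one_lt_floor (u * M)], Nat.floor_le (by positivity)⟩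

lemma choose_natFloor_two_mul_le_choose_natFloor {ε u : ℝ} (M : ℕ) (hε : 0 ≤ ε) (hu : 2 * ε ≤ u)
    (hu' : u ≤ 1 - 2 * ε) : M.choose ⌊2 * ε * M⌋₊ ≤ M.choose ⌊u * M⌋₊ := by
  refine Nat.choose_le_choose_of_le_of_le_sub (Nat.floor_le_floor (by gcongr)) ?_
  have : (⌊u * M⌋₊ + ⌊2 * ε * M⌋₊ : ℝ) ≤ M := by
    have := Nat.floor_le (a := u * M) (by nlinarith [(Nat.cast_nonneg M : (0 : ℝ) ≤ M)])
    have := Nat.floor_le (a := 2 * ε * M) (by positivity)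
    nlinarith
  have : ⌊u * M⌋₊ + ⌊2 * ε * M⌋₊ ≤ M := by exact_mod_cast this
  omega

section IndependentBernoulli

variable {Ω ι : Type*} [MeasurableSpace Ω] {μ : Measure Ω} [Fintype ι] [DecidableEq ι]
  {y : ι → Ω → ℝ} {p : ℝ}

lemma measureReal_iInter_preimage_ite (hmeas : ∀ i, Measurable (y i)) (hindep : iIndepFun y μ)
    (hdist : ∀ i, μ.map (y i) = bernoulliReal p) (hp0 : 0 ≤ p) (hp1 : p ≤ 1) (S : Finset ι) :
    μ.real (⋂ i, y i ⁻¹' {if i ∈ S then 1 else 0}) = p ^ #S * (1 - p) ^ (Fintype.card ι - #S) := by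
  have hprob : ∀ i, μ.real (y i ⁻¹' {if i ∈ S then 1 else 0}) = if i ∈ S then p else 1 - p := by
    intro i
    rw [← map_measureReal_apply (hmeas i) (measurableSet_singleton _), hdist i]
    split_ifs <;> simp [bernoulliReal, measureReal_def, hp0, sub_nonneg.2 hp1]
  rw [measureReal_def, hindep.meas_iInter fun i => ⟨_, measurableSet_singleton _, rfl⟩,
    ENNReal.toReal_prod]
  simp only [← measureReal_def, hprob]
  rw [Finset.prod_ite, Finset.prod_const, Finset.prod_const, Finset.filter_mem_eq_inter,
    Finset.univ_inter, Finset.filter_not, Finset.filter_mem_eq_inter, Finset.univ_inter,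
    Finset.card_univ_sdiff]

lemma choose_mul_pow_mul_pow_le_measureReal_sum_eq [IsFiniteMeasure μ]
    (hmeas : ∀ i, Measurable (y i)) (hindep : iIndepFun y μ)
    (hdist : ∀ i, μ.map (y i) = bernoulliReal p) (hp0 : 0 ≤ p) (hp1 : p ≤ 1) (k : ℕ) :
    (Fintype.card ι).choose k * p ^ k * (1 - p) ^ (Fintype.card ι - k) ≤
      μ.real {ω | ∑ i, y i ω = k} := by
  set E : Finset ι → Set Ω := fun S => ⋂ i, y i ⁻¹' {if i ∈ S then 1 else 0}
  have hE_meas (S : Finset ι) : MeasurableSet (E S) :=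
    .iInter fun i => hmeas i (measurableSet_singleton _)
  have hE_disj : (powersetCard k (univ : Finset ι) : Set (Finset ι)).PairwiseDisjoint E := by
    intro S _ T _ hST
    refine Set.disjoint_left.mpr fun ω hS hT => hST (Finset.ext fun i => ?_)
    simp only [E, Set.mem_iInter, Set.mem_preimage, Set.mem_singleton_iff] at hS hT
    have := (hS i).symm.trans (hT i)
    split_ifs at this <;> simp_all
  have hE_sub : ∀ S ∈ powersetCard k univ, E S ⊆ {ω | ∑ i, y i ω = k} := by
    intro S hS ω hω
    simp only [E, Set.mem_iInter, Set.mem_preimage, Set.mem_singleton_iff] at hω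
    simp [hω, (mem_powersetCard.1 hS).2]
  calc _ = ∑ S ∈ powersetCard k univ, μ.real (E S) := by
        rw [sum_congr rfl fun S hS => by
          rw [measureReal_iInter_preimage_ite hmeas hindep hdist hp0 hp1,
            (mem_powersetCard.1 hS).2]]
        simp [mul_assoc]
    _ = μ.real (⋃ S ∈ powersetCard k univ, E S) :=
        (measureReal_biUnion_finset hE_disj fun S _ => hE_meas S).symm
    _ ≤ _ := measureReal_mono (Set.iUnion₂_subset hE_sub)

end IndependentBernoulli

lemma choose_natFloor_mul_pow_le_measureReal_sum_eq_natFloor {Ω : Type*} [MeasurableSpace Ω]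
    {μ : Measure Ω} [IsFiniteMeasure μ] {M : ℕ} {y : Fin M → Ω → ℝ} {ε u : ℝ}
    (hmeas : ∀ i, Measurable (y i)) (hindep : iIndepFun y μ)
    (hdist : ∀ i, μ.map (y i) = bernoulliReal u) (hε : 0 ≤ ε) (hu : 2 * ε ≤ u)
    (hu' : u ≤ 1 - 2 * ε) :
    (M.choose ⌊2 * ε * M⌋₊ : ℝ) * (2 * ε) ^ M ≤ μ.real {ω | ∑ i, y i ω = ⌊u * M⌋₊} := by
  have hkM : ⌊u * M⌋₊ ≤ M := Nat.floor_le_of_le (by nlinarith [(Nat.cast_nonneg M : (0 : ℝ) ≤ M)])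
  calc _ ≤ (M.choose ⌊u * M⌋₊ : ℝ) * (u ^ ⌊u * M⌋₊ * (1 - u) ^ (M - ⌊u * M⌋₊)) := by
        gcongr
        · exact_mod_cast choose_natFloor_two_mul_le_choose_natFloor M hε hu hu'
        · exact pow_le_pow_mul_one_sub_pow (by positivity) hu hu' hkM
    _ ≤ _ := by
        simpa [mul_assoc] using choose_mul_pow_mul_pow_le_measureReal_sum_eq hmeas hindep hdist
          (by linarith) (by linarith) _

lemma inv_le_inv_sub_and_abs_inv_sub_le {x u ε : ℝ} (hu : 2 * ε < u) (hx : |x - u| < ε) :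
    u⁻¹ ≤ (x - ε)⁻¹ ∧ |(x - ε)⁻¹| ≤ (u - 2 * ε)⁻¹ := by
  rw [abs_lt] at hx
  have hxε : 0 < x - ε := by linarith
  refine ⟨inv_anti₀ hxε (by linarith), ?_⟩
  rw [abs_of_pos (inv_pos.2 hxε)]
  exact inv_anti₀ (by linarith) (by linarith)

lemma inv_add_div_mul_sub_le_inv_sub {x u ε : ℝ} (hu : 0 < u) (hxε : 0 < x - ε) (hxu : x ≤ u) :
    u⁻¹ + ε / (u * (u - ε)) ≤ (x - ε)⁻¹ := by
  have huε : u - ε ≠ 0 := by linarith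
  rw [show u⁻¹ + ε / (u * (u - ε)) = (u - ε)⁻¹ by field_simp; ring]
  exact inv_anti₀ hxε (by linarith)

section Conditioning

variable {Ω : Type*} [MeasurableSpace Ω] {μ : Measure Ω} {A B : Set Ω}

lemma measureReal_le_cond_measureReal [IsProbabilityMeasure μ] (hA : MeasurableSet A)
    (hBA : B ⊆ A) : μ.real B ≤ (μ[|A]).real B := by
  refine ENNReal.toReal_mono (measure_ne_top _ _) ?_
  rw [cond_apply hA, Set.inter_eq_self_of_subset_right hBA]
  calc μ B = 1 * μ B := (one_mul _).symm
    _ ≤ (μ A)⁻¹ * μ B := by gcongr; exact ENNReal.one_le_inv.2 prob_le_one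

lemma add_mul_measureReal_le_integral [IsProbabilityMeasure μ] {f : Ω → ℝ}
    (hf : Integrable f μ) (hB : MeasurableSet B) {a c : ℝ}
    (h : ∀ᵐ ω ∂μ, a + B.indicator (fun _ => c) ω ≤ f ω) : a + c * μ.real B ≤ ∫ ω, f ω ∂μ := by
  have hg : Integrable (fun ω => a + B.indicator (fun _ => c) ω) μ :=
    (integrable_const a).add ((integrable_const c).indicator hB)
  calc a + c * μ.real B = ∫ ω, a + B.indicator (fun _ => c) ω ∂μ := by
        rw [integral_add (integrable_const a) ((integrable_const c).indicator hB),
          integral_const, integral_indicator_const _ hB]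
        simp [mul_comm]
    _ ≤ _ := integral_mono_ae hg hf h

lemma add_mul_measureReal_le_integral_cond [IsProbabilityMeasure μ] (hA : MeasurableSet A)
    (hμA : μ A ≠ 0) (hB : MeasurableSet B) (hBA : B ⊆ A) {f : Ω → ℝ} (hf : Measurable f)
    {a c C : ℝ} (hc : 0 ≤ c) (hfC : ∀ ω ∈ A, |f ω| ≤ C) (hfA : ∀ ω ∈ A, a ≤ f ω)
    (hfB : ∀ ω ∈ B, a + c ≤ f ω) :
    a + c * μ.real B ≤ ∫ ω, f ω ∂μ[|A] := by
  have := cond_isProbabilityMeasure (μ := μ) hμA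
  have hf_int : Integrable f μ[|A] :=
    .of_bound hf.aestronglyMeasurable C (ae_cond_of_forall_mem hA hfC)
  calc a + c * μ.real B ≤ a + c * (μ[|A]).real B := by
        gcongr; exact measureReal_le_cond_measureReal hA hBA
    _ ≤ _ := by
      refine add_mul_measureReal_le_integral hf_int hB (ae_cond_of_forall_mem hA fun ω hω => ?_)
      by_cases hωB : ω ∈ B
      · simpa [hωB] using hfB ω hωB
      · simpa [hωB] using hfA ω hω

end Conditioning

theorem conditional_inv_lower_bound
    {Ω : Type*} [MeasurableSpace Ω] {μ : Measure Ω} [IsProbabilityMeasure μ]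
    (ε : ℝ) (hε : 0 < ε)
    (M : ℕ) (hMε : 1 ≤ (M : ℝ) * ε)
    (u₀ : ℝ) (hu₀ : u₀ ∈ Set.Ioo (2 * ε) (1 - 2 * ε))
    (y : Fin M → Ω → ℝ) (hmeas : ∀ k, Measurable (y k))
    (hindep : iIndepFun y μ)
    (hdist : ∀ k, Measure.map (y k) μ = bernoulliReal u₀)
    (uhat : Ω → ℝ) (huhat : ∀ ω, uhat ω = (∑ k, y k ω) / M)
    (A : Set Ω) (hA : A = {ω | |uhat ω - u₀| < ε}) :
    0 < μ A ∧
      ε / (u₀ * (u₀ - ε)) * (M.choose ⌊2 * ε * M⌋₊ : ℝ) * (2 * ε) ^ M + 1 / u₀ ≤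
        ∫ ω, (uhat ω - ε)⁻¹ ∂(μ[|A]) := by
  obtain ⟨hu₁, hu₂⟩ := hu₀
  have hu : 0 < u₀ := by linarith
  have hc : 0 < ε / (u₀ * (u₀ - ε)) := div_pos hε (mul_pos hu (by linarith))
  set k := ⌊u₀ * M⌋₊
  set B := {ω | ∑ i, y i ω = (k : ℝ)}
  have hsum_meas : Measurable fun ω => ∑ i, y i ω := Finset.measurable_sum _ fun i _ => hmeas i
  have huhat_meas : Measurable uhat := funext huhat ▸ hsum_meas.div_const _
  have hA_meas : MeasurableSet A :=
    hA ▸ measurableSet_lt (huhat_meas.sub measurable_const).abs measurable_const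
  obtain ⟨hk₁, hk₂⟩ := natFloor_mul_div_mem_Ioc hu.le hMε
  have huhat_B : ∀ ω ∈ B, uhat ω = k / M := fun ω hω => by rw [huhat, hω.out]
  have hBA : B ⊆ A := fun ω hω => by
    rw [hA, Set.mem_ofPred_eq, huhat_B ω hω, abs_lt]
    constructor <;> linarith
  have hB_meas : MeasurableSet B := hsum_meas (measurableSet_singleton _)
  have hμB : (M.choose ⌊2 * ε * M⌋₊ : ℝ) * (2 * ε) ^ M ≤ μ.real B :=
    choose_natFloor_mul_pow_le_measureReal_sum_eq_natFloor hmeas hindep hdist hε.le hu₁.le hu₂.le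
  have hμA : 0 < μ A := by
    have hchoose : 0 < M.choose ⌊2 * ε * M⌋₊ := Nat.choose_pos (Nat.floor_le_of_le (by nlinarith))
    have hμB_pos : 0 < μ.real B := lt_of_lt_of_le (by positivity) hμB
    exact (ENNReal.toReal_pos_iff.1 hμB_pos).1.trans_le (measure_mono hBA)
  refine ⟨hμA, ?_⟩
  calc ε / (u₀ * (u₀ - ε)) * (M.choose ⌊2 * ε * M⌋₊ : ℝ) * (2 * ε) ^ M + 1 / u₀
      ≤ u₀⁻¹ + ε / (u₀ * (u₀ - ε)) * μ.real B := by
        rw [one_div, add_comm, mul_assoc]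
        gcongr
    _ ≤ ∫ ω, (uhat ω - ε)⁻¹ ∂(μ[|A]) := by
      have hbounds (ω) (hω : ω ∈ A) := inv_le_inv_sub_and_abs_inv_sub_le hu₁ (hA ▸ hω)
      refine add_mul_measureReal_le_integral_cond hA_meas hμA.ne' hB_meas hBA
        (f := fun ω => (uhat ω - ε)⁻¹) (by fun_prop) hc.le (fun ω hω => (hbounds ω hω).2)
        (fun ω hω => (hbounds ω hω).1) fun ω hω => ?_
      rw [huhat_B ω hω]
      exact inv_add_div_mul_sub_le_inv_sub hu (by linarith) hk₂
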